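/- Let k = 4m+3 for a non-negative integer m, let x_i, y_i, z_i ∈ {0,1} for 0 ≤ i ≤ n, and define S_t = Σ_{i=n-t}^n (x_i + z_i - k y_i) 2^i. Suppose 0 ≤ S_t ≤ 2m·2^{n-t} and t < n. If (x_{n-t-1}, y_{n-t-1}, z_{n-t-1}) = (1,1,0) or (0,1,1), then S_{t+1} < 0. -/

import Mathlib

/-! The digit triples `(1,1,0)` and `(0,1,1)` both contribute `1 - k = -(4m+2)` at position
`n-t-1`, i.e. `-(2m+1) · 2^(n-t)`, which outweighs `S_t ≤ 2m · 2^(n-t)`. -/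

/-- `S_t = Σ_{i=n-t}^n (x_i + z_i - k y_i) 2^i` as an integer. -/
def Spoly (k n : ℕ) (x y z : ℕ → ℕ) (t : ℕ) : ℤ :=
  ∑ i ∈ Finset.Icc (n - t) n, ((x i : ℤ) + (z i : ℤ) - (k : ℤ) * (y i : ℤ)) * 2 ^ i

theorem Spoly_succ {k n t : ℕ} (ht : t < n) (x y z : ℕ → ℕ) :
    Spoly k n x y z (t + 1) =
      ((x (n - t - 1) : ℤ) + z (n - t - 1) - k * y (n - t - 1)) * 2 ^ (n - t - 1) +
        Spoly k n x y z t := by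
  have hIcc : Finset.Icc (n - (t + 1)) n = insert (n - t - 1) (Finset.Icc (n - t) n) := by
    ext i
    simp only [Finset.mem_Icc, Finset.mem_insert]
    omega
  have hnew : n - t - 1 ∉ Finset.Icc (n - t) n := by
    simp only [Finset.mem_Icc]
    omega
  rw [Spoly, hIcc, Finset.sum_insert hnew, ← Spoly]

theorem digit_eq_one_sub_of_mem (k : ℕ) {a b c : ℕ}
    (h : (a, b, c) = (1, 1, 0) ∨ (a, b, c) = (0, 1, 1)) :
    (a : ℤ) + c - k * b = 1 - k := by
  rcases h with h | h <;> simp only [Prod.mk.injEq] at h <;> simp [h.1, h.2.1, h.2.2]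

theorem stmt_7_general (m n t : ℕ) (ht : t < n)
    (x y z : ℕ → ℕ)
    (hS1 : Spoly (4 * m + 3) n x y z t ≤ (2 * m : ℤ) * 2 ^ (n - t))
    (hcase : (x (n - t - 1), y (n - t - 1), z (n - t - 1)) = (1, 1, 0) ∨
             (x (n - t - 1), y (n - t - 1), z (n - t - 1)) = (0, 1, 1)) :
    Spoly (4 * m + 3) n x y z (t + 1) < 0 := by
  rw [Spoly_succ ht, digit_eq_one_sub_of_mem _ hcase]
  have hpow : (2 : ℤ) ^ (n - t) = 2 * 2 ^ (n - t - 1) := by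
    rw [← pow_succ', Nat.sub_add_cancel (by omega)]
  have hpos : (0 : ℤ) < 2 ^ (n - t - 1) := by positivity
  rw [hpow] at hS1
  push_cast
  nlinarith

theorem stmt_7 (m n t : ℕ) (ht : t < n)
    (x y z : ℕ → ℕ)
    (hx : ∀ i ≤ n, x i ≤ 1) (hy : ∀ i ≤ n, y i ≤ 1) (hz : ∀ i ≤ n, z i ≤ 1)
    (hS0 : 0 ≤ Spoly (4 * m + 3) n x y z t)
    (hS1 : Spoly (4 * m + 3) n x y z t ≤ (2 * m : ℤ) * 2 ^ (n - t))
    (hcase : (x (n - t - 1), y (n - t - 1), z (n - t - 1)) = (1, 1, 0) ∨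
             (x (n - t - 1), y (n - t - 1), z (n - t - 1)) = (0, 1, 1)) :
    Spoly (4 * m + 3) n x y z (t + 1) < 0 :=
  stmt_7_general m n t ht x y z hS1 hcase
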